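/- Every topologically loosely Kronecker TDS is uniquely ergodic: if (X,T) is a TDS with ρ_FK(x,y) = 0 for all x,y ∈ X, then there is exactly one T-invariant Borel probability measure on X. -/

import Mathlib

open Filter Topology MeasureTheory Set

namespace FKPaper

variable {X : Type*} [MetricSpace X]

/-- The maximal fit of an `(n,δ)`-match between the orbits of `x` and `z` under `T`:
the largest cardinality of the domain of an order-preserving bijection
`π : D → R`, with `D, R ⊆ {0,…,n-1}` and `dist (T^[i] x) (T^[π i] z) < δ` for `i ∈ D`. -/
noncomputable def maxFit (T : X → X) (δ : ℝ) (n : ℕ) (x z : X) : ℕ :=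
  sSup {k : ℕ | ∃ i j : Fin k → ℕ, StrictMono i ∧ StrictMono j ∧
    (∀ s, i s < n) ∧ (∀ s, j s < n) ∧ ∀ s, dist (T^[i s] x) (T^[j s] z) < δ}

/-- `f̄_{n,δ}(x,z) = 1 - (maximal fit of an (n,δ)-match of x and z)/n`. -/
noncomputable def fbarN (T : X → X) (δ : ℝ) (n : ℕ) (x z : X) : ℝ :=
  1 - (maxFit T δ n x z : ℝ) / n

/-- `f̄_δ(x,z) = limsup_{n→∞} f̄_{n,δ}(x,z)`. -/
noncomputable def fbar (T : X → X) (δ : ℝ) (x z : X) : ℝ :=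
  Filter.limsup (fun n => fbarN T δ n x z) Filter.atTop

/-- The Feldman–Katok pseudometric `ρ_FK(x,z) = inf {δ > 0 : f̄_δ(x,z) < δ}`. -/
noncomputable def rhoFK (T : X → X) (x z : X) : ℝ :=
  sInf {δ : ℝ | 0 < δ ∧ fbar T δ x z < δ}

end FKPaper

open FKPaper Filter Topology MeasureTheory Set

/-!
Krylov–Bogolyubov gives an invariant probability measure: any weak-* cluster point of the
empirical measures `(1/n) ∑_{k<n} δ_{T^k x₀}`. For uniqueness, fix a bounded continuous `f`.
If `ρ_FK(x, y) = 0`, then for small `δ` most times `0 ≤ t < n` along the orbit of `x` are matched,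
in an order-preserving way, to times along the orbit of `y` at which the orbits are `δ`-close, so
the Birkhoff averages `Aₙ f x` and `Aₙ f y` become asymptotically equal. For an invariant
probability measure `μ`, `∫ Aₙ f dμ = ∫ f dμ`, and dominated convergence then gives
`Aₙ f y → ∫ f dμ`. The limit does not depend on `μ`, so all invariant measures agree on continuous
functions.
-/

open scoped NNReal ENNReal BoundedContinuousFunction

section BirkhoffAverage

variable {α : Type*}

theorem birkhoffSum_comp_self {M : Type*} [AddCommMonoid M] (f : α → α) (g : α → M) (n : ℕ)
    (x : α) : birkhoffSum f (g ∘ f) n x = birkhoffSum f g n (f x) := by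
  simp only [birkhoffSum, Function.comp_apply, ← Function.iterate_succ_apply' f,
    Function.iterate_succ_apply]

theorem birkhoffAverage_comp_self {M : Type*} (R : Type*) [DivisionSemiring R] [AddCommMonoid M]
    [Module R M] (f : α → α) (g : α → M) (n : ℕ) (x : α) :
    birkhoffAverage R f (g ∘ f) n x = birkhoffAverage R f g n (f x) := by
  simp only [birkhoffAverage, birkhoffSum_comp_self]

theorem norm_birkhoffAverage_le {E : Type*} (𝕜 : Type*) [RCLike 𝕜] [SeminormedAddCommGroup E]
    [NormedSpace 𝕜 E] (f : α → α) {g : α → E} {C : ℝ} (hC : ∀ x, ‖g x‖ ≤ C) (n : ℕ) (x : α) :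
    ‖birkhoffAverage 𝕜 f g n x‖ ≤ C := by
  rcases n.eq_zero_or_pos with rfl | hn
  · simpa using (norm_nonneg _).trans (hC x)
  have hsum : ‖birkhoffSum f g n x‖ ≤ n * C := by
    simpa [birkhoffSum] using norm_sum_le_of_le (Finset.range n) fun k _ => hC (f^[k] x)
  rw [birkhoffAverage, norm_smul, norm_inv, RCLike.norm_natCast, inv_mul_le_iff₀ (by positivity)]
  exact hsum

theorem norm_sum_range_sub_sum_le {E : Type*} [SeminormedAddCommGroup E] {φ : ℕ → E} {C : ℝ}
    (hC : ∀ t, ‖φ t‖ ≤ C) {n k : ℕ} {i : Fin k → ℕ} (hi : Function.Injective i)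
    (hin : ∀ s, i s < n) :
    ‖∑ t ∈ Finset.range n, φ t - ∑ s, φ (i s)‖ ≤ (n - k) * C := by
  have hsub : Finset.univ.image i ⊆ Finset.range n := by
    simpa [Finset.image_subset_iff] using hin
  have hcard : (Finset.univ.image i).card = k := by
    rw [Finset.card_image_of_injective _ hi, Finset.card_univ, Fintype.card_fin]
  have hk : k ≤ n := by simpa [hcard] using Finset.card_le_card hsub
  rw [← Finset.sum_image fun a _ b _ hab => hi hab, ← Finset.sum_sdiff hsub, add_sub_cancel_right]
  calc ‖∑ t ∈ Finset.range n \ Finset.univ.image i, φ t‖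
      ≤ ∑ _t ∈ Finset.range n \ Finset.univ.image i, C := norm_sum_le_of_le _ fun t _ => hC t
    _ = (n - k) * C := by
      rw [Finset.sum_const, Finset.card_sdiff_of_subset hsub, Finset.card_range, hcard,
        nsmul_eq_mul, Nat.cast_sub hk]

end BirkhoffAverage

section KrylovBogolyubov

variable {X : Type*} [MeasurableSpace X]

theorem measurePreserving_self_iff {T : X → X} {μ : Measure X} (hT : Measurable T) :
    MeasurePreserving T μ μ ↔ ∀ A, MeasurableSet A → μ (T ⁻¹' A) = μ A :=
  ⟨fun h _ hA => h.measure_preimage hA.nullMeasurableSet, fun h =>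
    ⟨hT, Measure.ext fun A hA => by rw [Measure.map_apply hT hA, h A hA]⟩⟩

theorem measure_birkhoffAverage_dirac_univ (T : X → X) {n : ℕ} (hn : n ≠ 0) (x : X) :
    birkhoffAverage ℝ≥0 T Measure.dirac n x univ = 1 := by
  simp only [birkhoffAverage, birkhoffSum, Measure.smul_apply, Measure.coe_finsetSum,
    Finset.sum_apply, measure_univ, Finset.sum_const, Finset.card_range, nsmul_eq_mul, mul_one]
  rw [ENNReal.smul_def, smul_eq_mul, ← ENNReal.coe_natCast, ← ENNReal.coe_mul,
    inv_mul_cancel₀ (by exact_mod_cast hn), ENNReal.coe_one]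

theorem integral_birkhoffAverage_dirac [TopologicalSpace X] [OpensMeasurableSpace X] (T : X → X)
    (n : ℕ) (x : X) (f : X →ᵇ ℝ) :
    ∫ y, f y ∂(birkhoffAverage ℝ≥0 T Measure.dirac n x) = birkhoffAverage ℝ T f n x := by
  rw [birkhoffAverage, birkhoffAverage, birkhoffSum, integral_smul_nnreal_measure,
    integral_finsetSum_measure fun k _ => f.integrable _]
  simp [birkhoffSum, integral_dirac' _ _ f.continuous.stronglyMeasurable, NNReal.smul_def]

theorem measurePreserving_of_forall_integral_comp_eq [TopologicalSpace X]
    [HasOuterApproxClosed X] [BorelSpace X] {T : X → X} (hT : Continuous T) {μ : Measure X}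
    [IsFiniteMeasure μ] (h : ∀ f : X →ᵇ ℝ, ∫ x, f (T x) ∂μ = ∫ x, f x ∂μ) :
    MeasurePreserving T μ μ := by
  refine ⟨hT.measurable, ext_of_forall_integral_eq_of_IsFiniteMeasure fun f => ?_⟩
  rw [integral_map hT.aemeasurable f.continuous.aestronglyMeasurable, h]

theorem exists_isProbabilityMeasure_measurePreserving [TopologicalSpace X] [T2Space X]
    [HasOuterApproxClosed X] [BorelSpace X] [CompactSpace X] [Nonempty X] {T : X → X}
    (hT : Continuous T) : ∃ μ : Measure X, IsProbabilityMeasure μ ∧ MeasurePreserving T μ μ := by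
  let x₀ : X := Classical.arbitrary X
  let ν : ℕ → ProbabilityMeasure X := fun n =>
    ⟨birkhoffAverage ℝ≥0 T Measure.dirac (n + 1) x₀,
      ⟨measure_birkhoffAverage_dirac_univ T n.succ_ne_zero x₀⟩⟩
  -- `ProbabilityMeasure X` is compact in the weak-* topology (Prokhorov).
  obtain ⟨μ, hμ⟩ := exists_clusterPt_of_compactSpace (map ν atTop)
  refine ⟨μ, inferInstance, measurePreserving_of_forall_integral_comp_eq hT fun f => ?_⟩
  let drift : ProbabilityMeasure X → ℝ := fun ρ => ∫ x, f (T x) ∂ρ - ∫ x, f x ∂ρ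
  have hdrift : Continuous drift :=
    (ProbabilityMeasure.continuous_integral_boundedContinuousFunction
      (f.compContinuous ⟨T, hT⟩)).sub
      (ProbabilityMeasure.continuous_integral_boundedContinuousFunction f)
  -- Along the empirical measures the drift telescopes to `(f (T^[n+1] x₀) - f x₀) / (n + 1)`.
  have hlim : Tendsto (drift ∘ ν) atTop (𝓝 0) := by
    refine ((tendsto_birkhoffAverage_apply_sub_birkhoffAverage' ℝ f.isBounded_range T x₀).comp
      (tendsto_add_atTop_nat 1)).congr fun n => ?_
    change _ = ∫ x, f.compContinuous ⟨T, hT⟩ x ∂(birkhoffAverage ℝ≥0 T Measure.dirac (n + 1) x₀)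
      - ∫ x, f x ∂(birkhoffAverage ℝ≥0 T Measure.dirac (n + 1) x₀)
    rw [integral_birkhoffAverage_dirac, integral_birkhoffAverage_dirac]
    exact congrArg (· - _) (birkhoffAverage_comp_self ℝ T f _ x₀).symm
  have hμ_drift : drift μ = 0 :=
    eq_of_nhds_neBot ((hμ.mapClusterPt_id.continuousAt_comp hdrift.continuousAt).neBot.mono
      (inf_le_inf_left _ hlim))
  exact sub_eq_zero.1 hμ_drift

end KrylovBogolyubov

section InvariantMeasure

theorem Measurable.birkhoffAverage {α : Type*} [MeasurableSpace α] {T : α → α} (hT : Measurable T)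
    {g : α → ℝ} (hg : Measurable g) (n : ℕ) : Measurable (birkhoffAverage ℝ T g n) := by
  have := fun k => hg.comp (hT.iterate k)
  unfold _root_.birkhoffAverage birkhoffSum
  fun_prop

variable {X : Type*} [MeasurableSpace X] [TopologicalSpace X] [OpensMeasurableSpace X]
  {T : X → X} {μ : Measure X}

theorem integral_birkhoffAverage [IsFiniteMeasure μ] (hT : MeasurePreserving T μ μ)
    (f : X →ᵇ ℝ) {n : ℕ} (hn : n ≠ 0) :
    ∫ x, birkhoffAverage ℝ T f n x ∂μ = ∫ x, f x ∂μ := by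
  have hcomp : ∀ k, ∫ x, f (T^[k] x) ∂μ = ∫ x, f x ∂μ := fun k => by
    rw [← integral_map (hT.iterate k).measurable.aemeasurable
      f.continuous.aestronglyMeasurable, (hT.iterate k).map_eq]
  simp only [birkhoffAverage, birkhoffSum]
  rw [integral_smul, integral_finsetSum (f := fun k x => f (T^[k] x)) _ fun k _ =>
      (hT.iterate k).integrable_comp_of_integrable (f.integrable μ),
    Finset.sum_congr rfl fun k _ => hcomp k, Finset.sum_const, Finset.card_range, nsmul_eq_mul,
    smul_eq_mul, inv_mul_cancel_left₀ (Nat.cast_ne_zero.2 hn)]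

theorem tendsto_birkhoffAverage_integral [IsProbabilityMeasure μ] (hT : MeasurePreserving T μ μ)
    (f : X →ᵇ ℝ) {y : X}
    (h : ∀ x, Tendsto (fun n => birkhoffAverage ℝ T f n x - birkhoffAverage ℝ T f n y) atTop
      (𝓝 0)) :
    Tendsto (fun n => birkhoffAverage ℝ T f n y) atTop (𝓝 (∫ x, f x ∂μ)) := by
  have hmeas : ∀ n, AEStronglyMeasurable (birkhoffAverage ℝ T f n) μ := fun n =>
    (hT.measurable.birkhoffAverage f.continuous.measurable n).aestronglyMeasurable
  have hbound : ∀ n x, ‖birkhoffAverage ℝ T f n x‖ ≤ ‖f‖ := fun n x =>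
    norm_birkhoffAverage_le ℝ T f.norm_coe_le_norm n x
  have hdct : Tendsto (fun n => ∫ x, birkhoffAverage ℝ T f n x - birkhoffAverage ℝ T f n y ∂μ)
      atTop (𝓝 0) := by
    simpa using tendsto_integral_of_dominated_convergence (fun _ => ‖f‖ + ‖f‖)
      (fun n => (hmeas n).sub aestronglyMeasurable_const) (integrable_const _)
      (fun n => .of_forall fun x => (norm_sub_le _ _).trans (add_le_add (hbound n x) (hbound n y)))
      (.of_forall h)
  have hint : ∀ n, Integrable (birkhoffAverage ℝ T f n) μ := fun n =>
    .of_bound (hmeas n) ‖f‖ (.of_forall (hbound n))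
  have hsplit : ∀ᶠ n in atTop, ∫ x, f x ∂μ -
      ∫ x, birkhoffAverage ℝ T f n x - birkhoffAverage ℝ T f n y ∂μ =
        birkhoffAverage ℝ T f n y := by
    filter_upwards [eventually_ne_atTop 0] with n hn
    rw [integral_sub (hint n) (integrable_const _), integral_birkhoffAverage hT f hn,
      integral_const, probReal_univ, one_smul, sub_sub_cancel]
  simpa using (tendsto_const_nhds.sub hdct).congr' hsplit

end InvariantMeasure

namespace FKPaper

variable {X : Type*} [MetricSpace X] {T : X → X} {δ : ℝ} {n : ℕ} {x z : X}

/-- An `(n, δ)`-match of size `k`, given by the increasing enumerations `i` of its domain and `j`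
of its range. -/
def IsMatch (T : X → X) (δ : ℝ) (n : ℕ) (x z : X) {k : ℕ} (i j : Fin k → ℕ) : Prop :=
  StrictMono i ∧ StrictMono j ∧ (∀ s, i s < n) ∧ (∀ s, j s < n) ∧
    ∀ s, dist (T^[i s] x) (T^[j s] z) < δ

theorem IsMatch.card_le {k : ℕ} {i j : Fin k → ℕ} (hm : IsMatch T δ n x z i j) : k ≤ n := by
  simpa using Fintype.card_le_of_injective (fun s => (⟨i s, hm.2.2.1 s⟩ : Fin n))
    fun a b hab => hm.1.injective (Fin.mk.inj_iff.1 hab)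

theorem isMatch_empty : IsMatch T δ n x z Fin.elim0 Fin.elim0 :=
  ⟨fun a => a.elim0, fun a => a.elim0, fun s => s.elim0, fun s => s.elim0, fun s => s.elim0⟩

theorem bddAbove_setOf_isMatch : BddAbove {k | ∃ i j : Fin k → ℕ, IsMatch T δ n x z i j} :=
  ⟨n, by rintro k ⟨i, j, hm⟩; exact hm.card_le⟩

theorem exists_isMatch_maxFit : ∃ i j : Fin (maxFit T δ n x z) → ℕ, IsMatch T δ n x z i j :=
  Nat.sSup_mem (s := {k | ∃ i j : Fin k → ℕ, IsMatch T δ n x z i j}) ⟨0, _, _, isMatch_empty⟩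
    bddAbove_setOf_isMatch

theorem le_maxFit {k : ℕ} {i j : Fin k → ℕ} (hm : IsMatch T δ n x z i j) :
    k ≤ maxFit T δ n x z :=
  le_csSup bddAbove_setOf_isMatch ⟨i, j, hm⟩

theorem maxFit_le : maxFit T δ n x z ≤ n :=
  exists_isMatch_maxFit.elim fun _ ⟨_, hm⟩ => hm.card_le

theorem fbarN_le_one : fbarN T δ n x z ≤ 1 :=
  sub_le_self _ (by positivity)

theorem fbar_eq_zero_of_forall_dist_lt (h : ∀ a b : X, dist a b < δ) : fbar T δ x z = 0 := by
  have hdiag : ∀ n, IsMatch T δ n x z (Fin.val : Fin n → ℕ) Fin.val := fun n =>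
    ⟨Fin.val_strictMono, Fin.val_strictMono, Fin.isLt, Fin.isLt, fun _ => h _ _⟩
  have hfbarN : ∀ᶠ n in atTop, fbarN T δ n x z = 0 := by
    filter_upwards [eventually_ne_atTop 0] with n hn
    rw [fbarN, le_antisymm maxFit_le (le_maxFit (hdiag n))]
    simp [hn]
  rw [fbar, limsup_congr hfbarN, limsup_const]

theorem exists_fbar_lt_self [BoundedSpace X] : ∃ δ, 0 < δ ∧ fbar T δ x z < δ := by
  refine ⟨Metric.diam (univ : Set X) + 1, by positivity, ?_⟩
  rw [fbar_eq_zero_of_forall_dist_lt fun a b => (Metric.dist_le_diam_of_mem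
    (Bornology.isBounded_univ.2 ‹_›) (mem_univ a) (mem_univ b)).trans_lt (lt_add_one _)]
  positivity

theorem exists_fbar_lt_of_rhoFK_eq_zero [BoundedSpace X] (h : rhoFK T x z = 0) {η : ℝ}
    (hη : 0 < η) : ∃ δ, 0 < δ ∧ δ < η ∧ fbar T δ x z < δ := by
  obtain ⟨δ, ⟨hδ, hfbar⟩, hδη⟩ :=
    exists_lt_of_csInf_lt (s := {δ | 0 < δ ∧ fbar T δ x z < δ}) exists_fbar_lt_self
      (h.trans_lt hη)
  exact ⟨δ, hδ, hδη, hfbar⟩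

theorem eventually_exists_isMatch (h : fbar T δ x z < δ) :
    ∀ᶠ n : ℕ in atTop, ∃ k : ℕ, (1 - δ) * n < k ∧ ∃ i j : Fin k → ℕ, IsMatch T δ n x z i j := by
  filter_upwards [eventually_lt_of_limsup_lt h (isBoundedUnder_of ⟨1, fun n => fbarN_le_one⟩),
    eventually_gt_atTop 0] with n hfbarN hn
  refine ⟨_, ?_, exists_isMatch_maxFit⟩
  rw [fbarN, sub_lt_comm, lt_div_iff₀ (by exact_mod_cast hn)] at hfbarN
  exact hfbarN

theorem norm_birkhoffSum_sub_le_of_isMatch {f : X → ℝ} {C ε : ℝ} (hC : ∀ a, ‖f a‖ ≤ C)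
    (hf : ∀ a b, dist a b < δ → ‖f a - f b‖ ≤ ε) {k : ℕ} {i j : Fin k → ℕ}
    (hm : IsMatch T δ n x z i j) :
    ‖birkhoffSum T f n x - birkhoffSum T f n z‖ ≤ 2 * (n - k) * C + k * ε := by
  obtain ⟨hi, hj, hin, hjn, hdist⟩ := hm
  have hx := norm_sum_range_sub_sum_le (φ := fun t => f (T^[t] x)) (fun _ => hC _) hi.injective hin
  have hz := norm_sum_range_sub_sum_le (φ := fun t => f (T^[t] z)) (fun _ => hC _) hj.injective hjn
  have hmatched : ‖∑ s, f (T^[i s] x) - ∑ s, f (T^[j s] z)‖ ≤ k * ε := by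
    simpa [← Finset.sum_sub_distrib] using
      norm_sum_le_of_le Finset.univ fun s _ => hf _ _ (hdist s)
  calc ‖birkhoffSum T f n x - birkhoffSum T f n z‖
      = ‖(birkhoffSum T f n x - ∑ s, f (T^[i s] x)) + (∑ s, f (T^[i s] x) - ∑ s, f (T^[j s] z))
          - (birkhoffSum T f n z - ∑ s, f (T^[j s] z))‖ := by congr 1; abel
    _ ≤ (n - k) * C + k * ε + (n - k) * C :=
      (norm_sub_le _ _).trans (add_le_add ((norm_add_le _ _).trans (add_le_add hx hmatched)) hz)
    _ = 2 * (n - k) * C + k * ε := by ring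

theorem tendsto_birkhoffAverage_sub_of_rhoFK_eq_zero [BoundedSpace X] {f : X → ℝ}
    (hf : UniformContinuous f) {C : ℝ} (hC : ∀ a, ‖f a‖ ≤ C) (h : rhoFK T x z = 0) :
    Tendsto (fun n => birkhoffAverage ℝ T f n x - birkhoffAverage ℝ T f n z) atTop (𝓝 0) := by
  refine NormedAddGroup.tendsto_nhds_zero.2 fun ε hε => ?_
  have hC0 : 0 ≤ C := (norm_nonneg _).trans (hC x)
  obtain ⟨δ₀, hδ₀, hclose⟩ := Metric.uniformContinuous_iff.1 hf (ε / 2) (half_pos hε)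
  -- `δ < ε / (4C + 1)` keeps the unmatched times, fewer than `δ n`, below `n ε / 2`.
  obtain ⟨δ, hδ, hδη, hfbar⟩ := exists_fbar_lt_of_rhoFK_eq_zero h
    (lt_min hδ₀ (show 0 < ε / (4 * C + 1) by positivity))
  filter_upwards [eventually_exists_isMatch hfbar, eventually_gt_atTop 0]
    with n ⟨k, hk, i, j, hm⟩ hn
  have hsum := norm_birkhoffSum_sub_le_of_isMatch hC
    (fun a b hab => (hclose (hab.trans_le (hδη.le.trans (min_le_left _ _)))).le) hm
  have hn' : (0 : ℝ) < n := by exact_mod_cast hn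
  have hkn : (k : ℝ) ≤ n := by exact_mod_cast hm.card_le
  have hδC : δ * (4 * C + 1) < ε :=
    (lt_div_iff₀ (by positivity)).1 (hδη.trans_le (min_le_right _ _))
  have hsmall : 2 * (n - k) * C + k * (ε / 2) < n * ε := by
    nlinarith [mul_le_mul_of_nonneg_right (show (n : ℝ) - k ≤ δ * n by linarith) hC0,
      mul_lt_mul_of_pos_right hδC hn']
  rw [birkhoffAverage, birkhoffAverage, ← smul_sub, norm_smul, norm_inv, RCLike.norm_natCast,
    inv_mul_lt_iff₀ hn']
  linarith

theorem eq_of_measurePreserving_of_forall_rhoFK_eq_zero [CompactSpace X] [Nonempty X]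
    [MeasurableSpace X] [BorelSpace X] (h : ∀ x y : X, rhoFK T x y = 0) {μ ν : Measure X}
    [IsProbabilityMeasure μ] [IsProbabilityMeasure ν] (hμ : MeasurePreserving T μ μ)
    (hν : MeasurePreserving T ν ν) : μ = ν := by
  refine ext_of_forall_integral_eq_of_IsFiniteMeasure fun f => ?_
  let y : X := Classical.arbitrary X
  have hshadow : ∀ x, Tendsto (fun n => birkhoffAverage ℝ T f n x - birkhoffAverage ℝ T f n y)
      atTop (𝓝 0) := fun x =>
    tendsto_birkhoffAverage_sub_of_rhoFK_eq_zero
      (CompactSpace.uniformContinuous_of_continuous f.continuous) f.norm_coe_le_norm (h x y)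
  exact tendsto_nhds_unique (tendsto_birkhoffAverage_integral hμ f hshadow)
    (tendsto_birkhoffAverage_integral hν f hshadow)

end FKPaper

/-- every topologically loosely Kronecker TDS is uniquely ergodic. -/
theorem uniquely_ergodic_of_topologically_loosely_Kronecker {X : Type*} [MetricSpace X] [CompactSpace X] [Nonempty X]
    (T : X → X) (hT : Continuous T) [MeasurableSpace X] [BorelSpace X]
    (h : ∀ x y : X, rhoFK T x y = 0) :
    ∃! μ : Measure X, IsProbabilityMeasure μ ∧
      ∀ A : Set X, MeasurableSet A → μ (T ⁻¹' A) = μ A := by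
  obtain ⟨μ, hμ, hTμ⟩ := exists_isProbabilityMeasure_measurePreserving hT
  refine ⟨μ, ⟨hμ, (measurePreserving_self_iff hT.measurable).1 hTμ⟩, ?_⟩
  rintro ν ⟨hν, hTν⟩
  exact eq_of_measurePreserving_of_forall_rhoFK_eq_zero h
    ((measurePreserving_self_iff hT.measurable).2 hTν) hTμ
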